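/- Let T₁ and T₂ be nonzero subspaces of a finite-dimensional real inner product space E with T₁ ∩ T₂ = {0} and T₁^⊥ ∩ T₂^⊥ = {0}. Set M := P_{T₁} ∘ P_{T₂} + P_{T₁^⊥} ∘ P_{T₂^⊥}, fix λ ∈ (0, 2), and set M_λ := (1 − λ)·Id + λ·M. Let c₁ denote the supremum of ⟨u, v⟩ over all unit vectors u ∈ T₁ and v ∈ T₂ (the cosine of the first principal angle). Then for every k ∈ ℕ, ‖M_λ^k‖ = (√((1 − λ)² + λ(2 − λ)·c₁²))^k, and √((1 − λ)² + λ(2 − λ)·c₁²) < 1; hence M_λ^k converges linearly to 0 with this optimal rate. -/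

import Mathlib

open RealInnerProductSpace

/-- The orthogonal projection onto a subspace, as a continuous linear endomorphism. -/
noncomputable def projCLM {E : Type*} [NormedAddCommGroup E] [InnerProductSpace ℝ E]
    [FiniteDimensional ℝ E] (T : Submodule ℝ E) : E →L[ℝ] E :=
  T.subtypeL.comp T.orthogonalProjection

/-- The cosine of the first principal angle between `T₁` and `T₂`: the supremum of
`⟪u, v⟫` over unit vectors `u ∈ T₁` and `v ∈ T₂`. -/
noncomputable def firstPrincipalCos {E : Type*} [NormedAddCommGroup E]
    [InnerProductSpace ℝ E] (T₁ T₂ : Submodule ℝ E) : ℝ :=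
  sSup { r : ℝ | ∃ u v : E, u ∈ T₁ ∧ v ∈ T₂ ∧ ‖u‖ = 1 ∧ ‖v‖ = 1 ∧ r = ⟪u, v⟫ }

/-!
Write `p, q` for the projections onto `T₁, T₂` and `M = pq + (1-p)(1-q)`. For idempotents one
computes `M*M = MM* = 1 - (p-q)²` and `M + M* = 2 M*M`; hence `M_λ = (1-λ) + λM` is normal, so
`‖M_λ^k‖ = ‖M_λ‖^k` (C*-identity), and `‖M_λ x‖² = (1-λ)²‖x‖² + λ(2-λ)‖Mx‖²`. It remains to see
`‖M‖ = c₁`. Since `Mx = p(qx) + (1-p)((1-q)x)` is an orthogonal sum, this follows from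
`‖p v‖ ≤ c₁‖v‖` on `T₂` (equality at a maximising pair) and `‖(1-p) z‖ ≤ c₁‖z‖` on `T₂ᗮ`. The
latter holds because the two trivial intersections force `dim T₁ + dim T₂ = dim E`, so that
`v ↦ (1-q) v` maps `T₁` onto `T₂ᗮ`; writing `z = (1-q) v` with `‖z‖ ≥ √(1-c₁²)‖v‖` and
`‖z‖² = ⟪p z, v⟫` gives `‖p z‖ ≥ √(1-c₁²)‖z‖`.
-/

section DouglasRachford

variable {A : Type*} [Ring A]

def douglasRachford (p q : A) : A := p * q + (1 - p) * (1 - q)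

variable {p q : A}

lemma douglasRachford_swap_mul (hp : IsIdempotentElem p) (hq : IsIdempotentElem q) :
    douglasRachford q p * douglasRachford p q = 1 - (p - q) ^ 2 := by
  have hp' : ∀ x, p * (p * x) = p * x := fun x => by rw [← mul_assoc, hp.eq]
  simp only [douglasRachford, mul_add, add_mul, mul_sub, sub_mul, mul_one, one_mul, sq, mul_assoc,
    hp.eq, hq.eq, hp']
  abel

lemma douglasRachford_add_swap (hp : IsIdempotentElem p) (hq : IsIdempotentElem q) :
    douglasRachford p q + douglasRachford q p = 2 • (1 - (p - q) ^ 2) := by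
  simp only [douglasRachford, mul_sub, sub_mul, mul_one, one_mul, sq, hp.eq, hq.eq]
  abel

variable [StarRing A]

lemma star_douglasRachford (hp : IsSelfAdjoint p) (hq : IsSelfAdjoint q) :
    star (douglasRachford p q) = douglasRachford q p := by
  simp [douglasRachford, hp.star_eq, hq.star_eq]

lemma isStarNormal_douglasRachford (hp : IsStarProjection p) (hq : IsStarProjection q) :
    IsStarNormal (douglasRachford p q) := by
  refine ⟨?_⟩
  rw [Commute, SemiconjBy, star_douglasRachford hp.isSelfAdjoint hq.isSelfAdjoint,
    douglasRachford_swap_mul hp.isIdempotentElem hq.isIdempotentElem,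
    douglasRachford_swap_mul hq.isIdempotentElem hp.isIdempotentElem, ← neg_sub p q, neg_sq]

lemma douglasRachford_add_star [Algebra ℝ A] (hp : IsStarProjection p)
    (hq : IsStarProjection q) :
    douglasRachford p q + star (douglasRachford p q) =
      (2 : ℝ) • (star (douglasRachford p q) * douglasRachford p q) := by
  rw [star_douglasRachford hp.isSelfAdjoint hq.isSelfAdjoint,
    douglasRachford_add_swap hp.isIdempotentElem hq.isIdempotentElem,
    douglasRachford_swap_mul hp.isIdempotentElem hq.isIdempotentElem, two_smul, two_smul]

end DouglasRachford

section Relaxation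

variable {A : Type*} [Ring A] [StarRing A] [Algebra ℝ A] [StarModule ℝ A] {m : A}

def relaxation (l : ℝ) (m : A) : A := (1 - l) • 1 + l • m

lemma star_relaxation_mul_self (hm : m + star m = (2 : ℝ) • (star m * m)) (l : ℝ) :
    star (relaxation l m) * relaxation l m =
      (1 - l) ^ 2 • (1 : A) + (l * (2 - l)) • (star m * m) := by
  simp only [relaxation, star_add, star_smul, star_one, star_trivial, add_mul, mul_add,
    smul_mul_smul_comm, one_mul, mul_one]
  linear_combination (norm := module) (l * (1 - l)) • hm

lemma IsStarNormal.relaxation (hm : IsStarNormal m) (l : ℝ) : IsStarNormal (relaxation l m) := by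
  refine ⟨?_⟩
  simp only [_root_.relaxation, star_add, star_smul, star_one, star_trivial]
  exact ((Commute.one_left _).smul_left _).add_left
    ((((Commute.one_right _).smul_right _).add_right (hm.star_comm_self.smul_right _)).smul_left _)

end Relaxation

section NormPow

variable {R : Type*} [NormedRing R] [NormOneClass R]

lemma norm_pow_eq_of_norm_pow_eq_of_le {x : R} {n k : ℕ} (hk : k ≤ n)
    (hn : ‖x ^ n‖ = ‖x‖ ^ n) : ‖x ^ k‖ = ‖x‖ ^ k := by
  refine le_antisymm (norm_pow_le x k) ?_
  rcases (norm_nonneg x).eq_or_lt with hx | hx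
  · rcases k.eq_zero_or_pos with rfl | hk0
    · simp
    · rw [← hx, zero_pow hk0.ne']
      exact norm_nonneg _
  refine le_of_mul_le_mul_right ?_ (pow_pos hx (n - k))
  calc ‖x‖ ^ k * ‖x‖ ^ (n - k) = ‖x ^ k * x ^ (n - k)‖ := by
        rw [← pow_add, ← pow_add, Nat.add_sub_cancel' hk, hn]
    _ ≤ ‖x ^ k‖ * ‖x‖ ^ (n - k) := (norm_mul_le _ _).trans (by gcongr; exact norm_pow_le x _)

variable [StarRing R] [CStarRing R]

lemma IsSelfAdjoint.norm_pow {x : R} (hx : IsSelfAdjoint x) (k : ℕ) : ‖x ^ k‖ = ‖x‖ ^ k :=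
  norm_pow_eq_of_norm_pow_eq_of_le Nat.lt_two_pow_self.le (hx.norm_pow_two_pow k)

lemma IsStarNormal.norm_pow {x : R} (hx : IsStarNormal x) (k : ℕ) : ‖x ^ k‖ = ‖x‖ ^ k := by
  have hsq : ‖x ^ k‖ ^ 2 = (‖x‖ ^ k) ^ 2 := by
    rw [sq, ← CStarRing.norm_star_mul_self, star_pow, ← hx.star_comm_self.mul_pow,
      (IsSelfAdjoint.star_mul_self x).norm_pow, CStarRing.norm_star_mul_self, ← sq, ← pow_mul,
      ← pow_mul, mul_comm]
  exact (pow_left_inj₀ (norm_nonneg _) (by positivity) two_ne_zero).1 hsq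

end NormPow

lemma ContinuousLinearMap.opNorm_eq_of_le_of_norm_apply_eq {𝕜 E F : Type*}
    [NontriviallyNormedField 𝕜] [SeminormedAddCommGroup E] [SeminormedAddCommGroup F]
    [NormedSpace 𝕜 E] [NormedSpace 𝕜 F] {f : E →L[𝕜] F} {r : ℝ} (hr : 0 ≤ r)
    (hle : ∀ x, ‖f x‖ ≤ r * ‖x‖) {x₀ : E} (hx₀ : ‖x₀‖ = 1) (heq : ‖f x₀‖ = r) : ‖f‖ = r :=
  le_antisymm (f.opNorm_le_bound hr hle) (by simpa [heq, hx₀] using f.le_opNorm x₀)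

lemma ContinuousLinearMap.norm_apply_sq_eq_inner_star_mul_self {E : Type*}
    [NormedAddCommGroup E] [InnerProductSpace ℝ E] [CompleteSpace E] (a : E →L[ℝ] E) (x : E) :
    ‖a x‖ ^ 2 = ⟪(star a * a) x, x⟫ :=
  a.apply_norm_sq_eq_inner_adjoint_left x

lemma ContinuousLinearMap.norm_relaxation_apply_sq {E : Type*} [NormedAddCommGroup E]
    [InnerProductSpace ℝ E] [CompleteSpace E] {m : E →L[ℝ] E}
    (hm : m + star m = (2 : ℝ) • (star m * m)) (l : ℝ) (x : E) :
    ‖relaxation l m x‖ ^ 2 = (1 - l) ^ 2 * ‖x‖ ^ 2 + l * (2 - l) * ‖m x‖ ^ 2 := by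
  rw [norm_apply_sq_eq_inner_star_mul_self, star_relaxation_mul_self hm,
    norm_apply_sq_eq_inner_star_mul_self, ← real_inner_self_eq_norm_sq]
  simp only [add_apply, smul_apply, one_apply_eq_self, inner_add_left, real_inner_smul_left]

lemma Real.sSup_nonneg_of_forall_neg_mem {s : Set ℝ} (hs : ∀ x ∈ s, -x ∈ s) : 0 ≤ sSup s := by
  rcases s.eq_empty_or_nonempty with rfl | ⟨x, hx⟩
  · rw [Real.sSup_empty]
  · rcases le_total 0 x with h | h
    · exact Real.sSup_nonneg' ⟨x, hx, h⟩
    · exact Real.sSup_nonneg' ⟨-x, hs x hx, neg_nonneg.2 h⟩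

namespace Submodule

variable {E : Type*} [NormedAddCommGroup E] [InnerProductSpace ℝ E] {S T : Submodule ℝ E}

lemma firstPrincipalCos_comm (S T : Submodule ℝ E) :
    firstPrincipalCos S T = firstPrincipalCos T S := by
  unfold firstPrincipalCos
  congr 1
  ext r
  constructor <;>
  · rintro ⟨u, v, hu, hv, hnu, hnv, rfl⟩
    exact ⟨v, u, hv, hu, hnv, hnu, real_inner_comm v u⟩

lemma firstPrincipalCos_nonneg (S T : Submodule ℝ E) : 0 ≤ firstPrincipalCos S T := by
  refine Real.sSup_nonneg_of_forall_neg_mem ?_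
  rintro _ ⟨u, v, hu, hv, hnu, hnv, rfl⟩
  exact ⟨-u, v, S.neg_mem hu, hv, by rwa [norm_neg], hnv, (inner_neg_left u v).symm⟩

lemma firstPrincipalCos_le_one (S T : Submodule ℝ E) : firstPrincipalCos S T ≤ 1 := by
  refine Real.sSup_le ?_ zero_le_one
  rintro _ ⟨u, v, -, -, hnu, hnv, rfl⟩
  simpa [hnu, hnv] using real_inner_le_norm u v

lemma inner_le_firstPrincipalCos {u v : E} (hu : u ∈ S) (hv : v ∈ T) (hnu : ‖u‖ = 1)
    (hnv : ‖v‖ = 1) : ⟪u, v⟫ ≤ firstPrincipalCos S T := by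
  refine le_csSup ⟨1, ?_⟩ ⟨u, v, hu, hv, hnu, hnv, rfl⟩
  rintro _ ⟨u, v, -, -, hnu, hnv, rfl⟩
  simpa [hnu, hnv] using real_inner_le_norm u v

lemma inner_le_firstPrincipalCos_mul {u v : E} (hu : u ∈ S) (hv : v ∈ T) :
    ⟪u, v⟫ ≤ firstPrincipalCos S T * (‖u‖ * ‖v‖) := by
  rcases eq_or_ne u 0 with rfl | hu0
  · simp
  rcases eq_or_ne v 0 with rfl | hv0
  · simp
  have h := inner_le_firstPrincipalCos (S.smul_mem ‖u‖⁻¹ hu) (T.smul_mem ‖v‖⁻¹ hv)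
    (norm_smul_inv_norm hu0) (norm_smul_inv_norm hv0)
  rw [real_inner_smul_left, real_inner_smul_right, ← mul_assoc, ← mul_inv,
    inv_mul_le_iff₀ (by positivity)] at h
  linarith

lemma norm_starProjection_le_firstPrincipalCos_mul [T.HasOrthogonalProjection] {u : E}
    (hu : u ∈ S) : ‖T.starProjection u‖ ≤ firstPrincipalCos S T * ‖u‖ := by
  have hsq : ‖T.starProjection u‖ ^ 2 ≤ firstPrincipalCos S T * ‖u‖ * ‖T.starProjection u‖ := by
    calc ‖T.starProjection u‖ ^ 2 = ⟪u, T.starProjection u⟫ := by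
          rw [← T.inner_starProjection_left_eq_right]
          exact (T.re_inner_starProjection_eq_normSq u).symm
      _ ≤ _ := by
          rw [mul_assoc]; exact inner_le_firstPrincipalCos_mul hu (T.starProjection_apply_mem u)
  rcases (norm_nonneg (T.starProjection u)).eq_or_lt with h | h
  · rw [← h]; exact mul_nonneg (firstPrincipalCos_nonneg S T) (norm_nonneg u)
  · exact le_of_mul_le_mul_right (by rwa [sq] at hsq) h


section FiniteDimensional

variable [FiniteDimensional ℝ E]

lemma exists_inner_eq_firstPrincipalCos (hS : S ≠ ⊥) (hT : T ≠ ⊥) :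
    ∃ u v : E, u ∈ S ∧ v ∈ T ∧ ‖u‖ = 1 ∧ ‖v‖ = 1 ∧ firstPrincipalCos S T = ⟪u, v⟫ := by
  have hset : { r : ℝ | ∃ u v : E, u ∈ S ∧ v ∈ T ∧ ‖u‖ = 1 ∧ ‖v‖ = 1 ∧ r = ⟪u, v⟫ } =
      (fun p : E × E => ⟪p.1, p.2⟫) '' ((Metric.sphere 0 1 ∩ S) ×ˢ (Metric.sphere 0 1 ∩ T)) := by
    ext r
    simp only [Set.mem_ofPred_eq, Set.mem_image, Set.mem_prod, Set.mem_inter_iff,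
      mem_sphere_zero_iff_norm, SetLike.mem_coe, Prod.exists]
    grind
  have hcompact : IsCompact ((Metric.sphere (0 : E) 1 ∩ S) ×ˢ (Metric.sphere (0 : E) 1 ∩ T)) :=
    ((isCompact_sphere 0 1).inter_right S.closed_of_finiteDimensional).prod
      ((isCompact_sphere 0 1).inter_right T.closed_of_finiteDimensional)
  obtain ⟨x, hxS, hx0⟩ := exists_mem_ne_zero_of_ne_bot hS
  obtain ⟨y, hyT, hy0⟩ := exists_mem_ne_zero_of_ne_bot hT
  have hne : { r : ℝ | ∃ u v : E, u ∈ S ∧ v ∈ T ∧ ‖u‖ = 1 ∧ ‖v‖ = 1 ∧ r = ⟪u, v⟫ }.Nonempty :=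
    ⟨_, _, _, S.smul_mem _ hxS, T.smul_mem _ hyT, norm_smul_inv_norm hx0, norm_smul_inv_norm hy0,
      rfl⟩
  rw [hset] at hne
  have hmem := (hcompact.image continuous_inner).sSup_mem hne
  rwa [← hset] at hmem

lemma firstPrincipalCos_lt_one (hS : S ≠ ⊥) (hT : T ≠ ⊥) (h : S ⊓ T = ⊥) :
    firstPrincipalCos S T < 1 := by
  obtain ⟨u, v, hu, hv, hnu, hnv, hc⟩ := exists_inner_eq_firstPrincipalCos hS hT
  refine (firstPrincipalCos_le_one S T).lt_of_ne fun h1 => ?_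
  have huv : u = v := by
    rw [← sub_eq_zero, ← norm_eq_zero, ← sq_eq_zero_iff, norm_sub_sq_real, hnu, hnv, ← hc, h1]
    norm_num
  have : u ∈ S ⊓ T := ⟨hu, huv ▸ hv⟩
  rw [h, mem_bot] at this
  simp [this] at hnu

lemma exists_norm_starProjection_eq_firstPrincipalCos (hS : S ≠ ⊥) (hT : T ≠ ⊥) :
    ∃ v ∈ T, ‖v‖ = 1 ∧ ‖S.starProjection v‖ = firstPrincipalCos S T := by
  obtain ⟨u, v, hu, hv, hnu, hnv, hc⟩ := exists_inner_eq_firstPrincipalCos hS hT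
  refine ⟨v, hv, hnv, le_antisymm ?_ ?_⟩
  · simpa [hnv, firstPrincipalCos_comm T S] using
      norm_starProjection_le_firstPrincipalCos_mul (T := S) hv
  · calc firstPrincipalCos S T = ⟪u, S.starProjection v⟫ := by
          rw [hc, ← S.inner_starProjection_left_eq_right, S.starProjection_eq_self_iff.2 hu]
      _ ≤ ‖S.starProjection v‖ := by simpa [hnu] using real_inner_le_norm u (S.starProjection v)

lemma finrank_eq_finrank_orthogonal_of_inf_eq_bot (h : S ⊓ T = ⊥) (h' : Sᗮ ⊓ Tᗮ = ⊥) :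
    Module.finrank ℝ T = Module.finrank ℝ Sᗮ := by
  have h₁ := finrank_sup_add_finrank_inf_eq S T
  have h₂ := finrank_sup_add_finrank_inf_eq Sᗮ Tᗮ
  rw [h, finrank_bot] at h₁
  rw [h', finrank_bot] at h₂
  have := (S ⊔ T).finrank_le
  have := (Sᗮ ⊔ Tᗮ).finrank_le
  have := S.finrank_add_finrank_orthogonal
  have := T.finrank_add_finrank_orthogonal
  omega

lemma exists_mem_starProjection_orthogonal_eq (h : S ⊓ T = ⊥) (h' : Sᗮ ⊓ Tᗮ = ⊥) {z : E}
    (hz : z ∈ Sᗮ) : ∃ w ∈ T, Sᗮ.starProjection w = z := by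
  let g : T →ₗ[ℝ] Sᗮ := Sᗮ.orthogonalProjectionOnto.toLinearMap ∘ₗ T.subtype
  have hg : Function.Injective g := by
    rw [← LinearMap.ker_eq_bot, eq_bot_iff]
    rintro ⟨w, hw⟩ hgw
    have hwS : w ∈ S := by
      simpa [g, orthogonal_orthogonal] using hgw
    have : w ∈ S ⊓ T := ⟨hwS, hw⟩
    simpa [h] using this
  obtain ⟨⟨w, hw⟩, hgw⟩ :=
    (LinearMap.injective_iff_surjective_of_finrank_eq_finrank
      (finrank_eq_finrank_orthogonal_of_inf_eq_bot h h')).1 hg ⟨z, hz⟩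
  exact ⟨w, hw, congrArg Subtype.val hgw⟩

lemma one_sub_sq_mul_norm_sq_le_norm_starProjection_sq (h : S ⊓ T = ⊥) (h' : Sᗮ ⊓ Tᗮ = ⊥)
    {z : E} (hz : z ∈ Sᗮ) :
    (1 - firstPrincipalCos S T ^ 2) * ‖z‖ ^ 2 ≤ ‖T.starProjection z‖ ^ 2 := by
  set c := firstPrincipalCos S T
  obtain ⟨w, hw, rfl⟩ := exists_mem_starProjection_orthogonal_eq h h' hz
  set z := Sᗮ.starProjection w
  have hPw : ‖S.starProjection w‖ ≤ c * ‖w‖ := by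
    simpa [c, firstPrincipalCos_comm T S] using
      norm_starProjection_le_firstPrincipalCos_mul (T := S) hw
  have hz_le : (1 - c ^ 2) * ‖w‖ ^ 2 ≤ ‖z‖ ^ 2 := by
    have := S.norm_sq_eq_add_norm_sq_starProjection w
    nlinarith [pow_le_pow_left₀ (norm_nonneg _) hPw 2]
  have hz_sq : ‖z‖ ^ 2 ≤ ‖T.starProjection z‖ * ‖w‖ := by
    calc ‖z‖ ^ 2 = ⟪T.starProjection z, w⟫ := by
          rw [← real_inner_self_eq_norm_sq, T.inner_starProjection_left_eq_right,
            T.starProjection_eq_self_iff.2 hw, ← Sᗮ.inner_starProjection_left_eq_right,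
            Sᗮ.starProjection_eq_self_iff.2 (Sᗮ.starProjection_apply_mem w)]
      _ ≤ ‖T.starProjection z‖ * ‖w‖ := real_inner_le_norm _ _
  rcases (norm_nonneg w).eq_or_lt with hw0 | hw0
  · rw [← hw0, mul_zero] at hz_sq
    have : ‖z‖ = 0 := by nlinarith [norm_nonneg z]
    simp [this]
  refine le_of_mul_le_mul_right ?_ (pow_pos hw0 2)
  calc (1 - c ^ 2) * ‖z‖ ^ 2 * ‖w‖ ^ 2 = ‖z‖ ^ 2 * ((1 - c ^ 2) * ‖w‖ ^ 2) := by ring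
    _ ≤ (‖z‖ ^ 2) ^ 2 := by rw [sq (‖z‖ ^ 2)]; gcongr
    _ ≤ (‖T.starProjection z‖ * ‖w‖) ^ 2 := by gcongr
    _ = ‖T.starProjection z‖ ^ 2 * ‖w‖ ^ 2 := by ring

lemma norm_starProjection_orthogonal_le_firstPrincipalCos_mul (h : S ⊓ T = ⊥)
    (h' : Sᗮ ⊓ Tᗮ = ⊥) {z : E} (hz : z ∈ Sᗮ) :
    ‖Tᗮ.starProjection z‖ ≤ firstPrincipalCos S T * ‖z‖ := by
  have hsq : ‖Tᗮ.starProjection z‖ ^ 2 ≤ (firstPrincipalCos S T * ‖z‖) ^ 2 := by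
    have := T.norm_sq_eq_add_norm_sq_starProjection z
    nlinarith [one_sub_sq_mul_norm_sq_le_norm_starProjection_sq h h' hz]
  exact (pow_le_pow_iff_left₀ (norm_nonneg _)
    (mul_nonneg (firstPrincipalCos_nonneg S T) (norm_nonneg z)) two_ne_zero).1 hsq

end FiniteDimensional

end Submodule

section Projections

variable {E : Type*} [NormedAddCommGroup E] [InnerProductSpace ℝ E] [FiniteDimensional ℝ E]
  {S T : Submodule ℝ E}

lemma douglasRachford_starProjection_apply (x : E) :
    douglasRachford S.starProjection T.starProjection x =
      S.starProjection (T.starProjection x) + Sᗮ.starProjection (Tᗮ.starProjection x) := by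
  simp [douglasRachford, Submodule.starProjection_orthogonal']

lemma norm_douglasRachford_starProjection_apply_le (h : S ⊓ T = ⊥) (h' : Sᗮ ⊓ Tᗮ = ⊥) (x : E) :
    ‖douglasRachford S.starProjection T.starProjection x‖ ≤ firstPrincipalCos S T * ‖x‖ := by
  set c := firstPrincipalCos S T with hc
  rw [Submodule.firstPrincipalCos_comm] at hc
  have h₁ : ‖S.starProjection (T.starProjection x)‖ ≤ c * ‖T.starProjection x‖ :=
    hc ▸ Submodule.norm_starProjection_le_firstPrincipalCos_mul (T.starProjection_apply_mem x)
  have h₂ : ‖Sᗮ.starProjection (Tᗮ.starProjection x)‖ ≤ c * ‖Tᗮ.starProjection x‖ :=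
    hc ▸ Submodule.norm_starProjection_orthogonal_le_firstPrincipalCos_mul (by rwa [inf_comm])
      (by rwa [inf_comm]) (Tᗮ.starProjection_apply_mem x)
  have horth := Submodule.inner_right_of_mem_orthogonal (S.starProjection_apply_mem
    (T.starProjection x)) (Sᗮ.starProjection_apply_mem (Tᗮ.starProjection x))
  have hsq : ‖douglasRachford S.starProjection T.starProjection x‖ ^ 2 ≤ (c * ‖x‖) ^ 2 := by
    rw [douglasRachford_starProjection_apply, sq, norm_add_sq_eq_norm_sq_add_norm_sq_real horth,
      mul_pow, T.norm_sq_eq_add_norm_sq_starProjection x]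
    nlinarith [pow_le_pow_left₀ (norm_nonneg _) h₁ 2, pow_le_pow_left₀ (norm_nonneg _) h₂ 2]
  exact (pow_le_pow_iff_left₀ (norm_nonneg _)
    (mul_nonneg (Submodule.firstPrincipalCos_nonneg S T) (norm_nonneg x)) two_ne_zero).1 hsq

lemma norm_relaxation_douglasRachford_starProjection (hS : S ≠ ⊥) (hT : T ≠ ⊥) (h : S ⊓ T = ⊥)
    (h' : Sᗮ ⊓ Tᗮ = ⊥) {l : ℝ} (hl : l ∈ Set.Icc (0 : ℝ) 2) :
    ‖relaxation l (douglasRachford S.starProjection T.starProjection)‖ =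
      √((1 - l) ^ 2 + l * (2 - l) * firstPrincipalCos S T ^ 2) := by
  obtain ⟨v, hv, hnv, hSv⟩ := Submodule.exists_norm_starProjection_eq_firstPrincipalCos hS hT
  set c := firstPrincipalCos S T
  set m := douglasRachford S.starProjection T.starProjection
  have hl' : 0 ≤ l * (2 - l) := mul_nonneg hl.1 (by linarith [hl.2])
  have hr : 0 ≤ (1 - l) ^ 2 + l * (2 - l) * c ^ 2 := by positivity
  have hm := ContinuousLinearMap.norm_relaxation_apply_sq (douglasRachford_add_star
    (isStarProjection_starProjection (U := S)) (isStarProjection_starProjection (U := T))) l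
  refine ContinuousLinearMap.opNorm_eq_of_le_of_norm_apply_eq (Real.sqrt_nonneg _) (fun x => ?_)
    hnv ?_
  · rw [← pow_le_pow_iff_left₀ (norm_nonneg _) (by positivity) two_ne_zero, mul_pow,
      Real.sq_sqrt hr, hm]
    have hmx := norm_douglasRachford_starProjection_apply_le h h' x
    nlinarith [pow_le_pow_left₀ (norm_nonneg _) hmx 2]
  · have hmv : ‖m v‖ = c := by
      rw [← hSv, douglasRachford_starProjection_apply, T.starProjection_eq_self_iff.2 hv,
        (Tᗮ.starProjection_apply_eq_zero_iff).2 (T.le_orthogonal_orthogonal hv), map_zero, add_zero]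
    rw [← Real.sqrt_sq (norm_nonneg _), hm, hmv, hnv]
    ring_nf

end Projections

/-- When `T₁ ∩ T₂ = {0}` and `T₁^⊥ ∩ T₂^⊥ = {0}`, the powers of the relaxed linearized
Douglas–Rachford matrix converge linearly to `0` with optimal rate governed by the cosine
of the first principal angle. -/
theorem DR_matrix_rate_trivial_intersection {E : Type*} [NormedAddCommGroup E]
    [InnerProductSpace ℝ E] [FiniteDimensional ℝ E]
    (T₁ T₂ : Submodule ℝ E) (hT₁ : T₁ ≠ ⊥) (hT₂ : T₂ ≠ ⊥)
    (hinter : T₁ ⊓ T₂ = ⊥) (hinter' : T₁ᗮ ⊓ T₂ᗮ = ⊥)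
    (M : E →L[ℝ] E)
    (hM : M = (projCLM T₁).comp (projCLM T₂) + (projCLM T₁ᗮ).comp (projCLM T₂ᗮ))
    {l : ℝ} (hl : l ∈ Set.Ioo (0 : ℝ) 2)
    (Ml : E →L[ℝ] E) (hMl : Ml = (1 - l) • (1 : E →L[ℝ] E) + l • M)
    (c₁ : ℝ) (hc₁ : c₁ = firstPrincipalCos T₁ T₂) :
    (∀ k : ℕ, ‖Ml ^ k‖ = (Real.sqrt ((1 - l) ^ 2 + l * (2 - l) * c₁ ^ 2)) ^ k) ∧
      Real.sqrt ((1 - l) ^ 2 + l * (2 - l) * c₁ ^ 2) < 1 := by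
  have hM' : M = douglasRachford T₁.starProjection T₂.starProjection := by
    rw [hM, douglasRachford, ← T₁.starProjection_orthogonal', ← T₂.starProjection_orthogonal']
    rfl
  have hMl' : Ml = relaxation l M := hMl
  have hnormal : IsStarNormal Ml := hMl' ▸ hM' ▸ (isStarNormal_douglasRachford
    isStarProjection_starProjection isStarProjection_starProjection).relaxation l
  have hnorm : ‖Ml‖ = √((1 - l) ^ 2 + l * (2 - l) * c₁ ^ 2) := by
    rw [hMl', hM', hc₁]
    exact norm_relaxation_douglasRachford_starProjection hT₁ hT₂ hinter hinter'
      (Set.Ioo_subset_Icc_self hl)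
  -- `IsStarNormal.norm_pow` needs `‖1‖ = 1` (the case `k = 0`), i.e. `E ≠ 0`.
  obtain ⟨x, -, hx⟩ := Submodule.exists_mem_ne_zero_of_ne_bot hT₁
  have : Nontrivial E := nontrivial_of_ne x 0 hx
  refine ⟨fun k => by rw [hnormal.norm_pow, hnorm], ?_⟩
  have hc₀ : 0 ≤ c₁ := hc₁ ▸ Submodule.firstPrincipalCos_nonneg T₁ T₂
  have hc₁' : c₁ < 1 := hc₁ ▸ Submodule.firstPrincipalCos_lt_one hT₁ hT₂ hinter
  rw [Real.sqrt_lt' one_pos]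
  have hc₁sq : c₁ ^ 2 < 1 := pow_lt_one₀ hc₀ hc₁' two_ne_zero
  nlinarith [mul_pos (mul_pos hl.1 (sub_pos.2 hl.2)) (sub_pos.2 hc₁sq)]
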